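/- arXiv:1610.07746 — 2 statements merged into one kernel-verified Lean document; each statement's English description precedes it below -/
import Mathlib

section
/- Let G be a finitely generated group with word length L and σ an almost submultiplicative growth function. For every R ≥ 0 and ε > 0 there is a constant c > 0 such that ‖ab‖_{R} ≤ c·‖a‖_{R+ε}·‖b‖_{R+ε} for all finitely supported a, b: G → ℂ, where ‖a‖_R = Σ_g |a_g|·σ(L(g))^R and ab denotes convolution. -/
theorem weighted_ell1_norm_almost_submultiplicative
    {G : Type*} [Group G] (L : G → ℕ)
    (hLinv : ∀ g : G, L g⁻¹ = L g)
    (hLsub : ∀ g h : G, L (g * h) ≤ L g + L h)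
    (σ : ℕ → ℝ) (hσ1 : ∀ n, 1 ≤ σ n) (hmono : Monotone σ)
    (hunbdd : ¬ BddAbove (Set.range σ))
    (halmost : ∀ δ : ℝ, 0 < δ → ∃ c : ℝ, 0 < c ∧
      ∀ n m : ℕ, σ (n + m) ≤ c * σ n ^ ((1 : ℝ) + δ) * σ m ^ ((1 : ℝ) + δ)) :
    ∀ R : ℝ, 0 ≤ R → ∀ ε : ℝ, 0 < ε → ∃ c : ℝ, 0 < c ∧
      ∀ a b : MonoidAlgebra ℂ G,
        ∑ h ∈ (a * b).coeff.support, ‖(a * b).coeff h‖ * σ (L h) ^ R ≤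
          c * (∑ g ∈ a.coeff.support, ‖a.coeff g‖ * σ (L g) ^ (R + ε)) *
            (∑ g ∈ b.coeff.support, ‖b.coeff g‖ * σ (L g) ^ (R + ε)) := by
  classical
  intro R hR ε hε
  set δ := ε / (R + 1) with hδdef
  have hR1 : (0:ℝ) < R + 1 := by linarith
  have hδ : 0 < δ := div_pos hε hR1
  obtain ⟨c, hc, hcineq⟩ := halmost δ hδ
  refine ⟨c ^ R, Real.rpow_pos_of_pos hc R, ?_⟩
  intro a b
  have hσpos : ∀ n, 0 < σ n := fun n => lt_of_lt_of_le one_pos (hσ1 n)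
  have key : ∀ g₁ g₂ : G,
      σ (L (g₁ * g₂)) ^ R ≤ c ^ R * (σ (L g₁) ^ (R + ε) * σ (L g₂) ^ (R + ε)) := by
    intro g₁ g₂
    have h1 : σ (L (g₁ * g₂)) ≤ c * σ (L g₁) ^ ((1:ℝ) + δ) * σ (L g₂) ^ ((1:ℝ) + δ) :=
      le_trans (hmono (hLsub g₁ g₂)) (hcineq _ _)
    have h2 : σ (L (g₁ * g₂)) ^ R ≤
        (c * σ (L g₁) ^ ((1:ℝ) + δ) * σ (L g₂) ^ ((1:ℝ) + δ)) ^ R :=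
      Real.rpow_le_rpow (le_of_lt (hσpos _)) h1 hR
    have hx : (0:ℝ) ≤ σ (L g₁) := le_of_lt (hσpos _)
    have hy : (0:ℝ) ≤ σ (L g₂) := le_of_lt (hσpos _)
    have hexp : (1 + δ) * R ≤ R + ε := by
      have : δ * R ≤ ε := by
        rw [hδdef, div_mul_eq_mul_div, div_le_iff₀ hR1]
        nlinarith
      nlinarith
    have h3 : (c * σ (L g₁) ^ ((1:ℝ) + δ) * σ (L g₂) ^ ((1:ℝ) + δ)) ^ R
        = c ^ R * (σ (L g₁) ^ (((1:ℝ) + δ) * R) * σ (L g₂) ^ (((1:ℝ) + δ) * R)) := by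
      rw [Real.mul_rpow (by positivity) (by positivity),
        Real.mul_rpow (le_of_lt hc) (by positivity),
        ← Real.rpow_mul hx, ← Real.rpow_mul hy, mul_assoc]
    have h4 : σ (L g₁) ^ (((1:ℝ) + δ) * R) ≤ σ (L g₁) ^ (R + ε) :=
      Real.rpow_le_rpow_of_exponent_le (hσ1 _) hexp
    have h5 : σ (L g₂) ^ (((1:ℝ) + δ) * R) ≤ σ (L g₂) ^ (R + ε) :=
      Real.rpow_le_rpow_of_exponent_le (hσ1 _) hexp
    calc σ (L (g₁ * g₂)) ^ R ≤ _ := h2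
      _ = _ := h3
      _ ≤ c ^ R * (σ (L g₁) ^ (R + ε) * σ (L g₂) ^ (R + ε)) := by
          exact mul_le_mul_of_nonneg_left
            (mul_le_mul h4 h5 (Real.rpow_nonneg hy _) (Real.rpow_nonneg hx _))
            (le_of_lt (Real.rpow_pos_of_pos hc R))
  set S := a.coeff.support ×ˢ b.coeff.support with hS
  set F : G × G → ℝ := fun p =>
    ‖a.coeff p.1‖ * ‖b.coeff p.2‖ * (c ^ R * (σ (L p.1) ^ (R + ε) * σ (L p.2) ^ (R + ε))) with hF
  have hσR : ∀ (n : ℕ) (s : ℝ), 0 ≤ σ n ^ s :=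
    fun n s => Real.rpow_nonneg (le_of_lt (hσpos n)) s
  have hcR : (0:ℝ) ≤ c ^ R := le_of_lt (Real.rpow_pos_of_pos hc R)
  have hFnonneg : ∀ p, 0 ≤ F p := fun p =>
    mul_nonneg (mul_nonneg (norm_nonneg _) (norm_nonneg _))
      (mul_nonneg hcR (mul_nonneg (hσR _ _) (hσR _ _)))
  have step1 : ∀ h ∈ (a * b).coeff.support,
      ‖(a * b).coeff h‖ * σ (L h) ^ R ≤
        ∑ p ∈ S.filter (fun p => p.1 * p.2 = h), F p := by
    intro h _
    have hmul : (a * b).coeff h = ∑ p ∈ S.filter (fun p => p.1 * p.2 = h), a.coeff p.1 * b.coeff p.2 := by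
      rw [MonoidAlgebra.coeff_mul, Finset.sum_filter, hS, Finset.sum_product]
      simp [Finsupp.sum]
    calc ‖(a * b).coeff h‖ * σ (L h) ^ R
        ≤ (∑ p ∈ S.filter (fun p => p.1 * p.2 = h), ‖a.coeff p.1 * b.coeff p.2‖) * σ (L h) ^ R := by
          apply mul_le_mul_of_nonneg_right _ (hσR _ _)
          rw [hmul]; exact norm_sum_le _ _
      _ = ∑ p ∈ S.filter (fun p => p.1 * p.2 = h),
            ‖a.coeff p.1‖ * ‖b.coeff p.2‖ * σ (L h) ^ R := by
          rw [Finset.sum_mul]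
          exact Finset.sum_congr rfl (fun p _ => by rw [norm_mul])
      _ ≤ ∑ p ∈ S.filter (fun p => p.1 * p.2 = h), F p := by
          apply Finset.sum_le_sum
          intro p hp
          rw [Finset.mem_filter] at hp
          have := key p.1 p.2
          rw [hp.2] at this
          exact mul_le_mul_of_nonneg_left this
            (mul_nonneg (norm_nonneg _) (norm_nonneg _))
  have hsubset : (a * b).coeff.support ⊆ S.image (fun p => p.1 * p.2) := by
    intro h hh
    have := MonoidAlgebra.support_coeff_mul_subset a b hh
    simpa [Finset.mul_def, hS] using this
  calc ∑ h ∈ (a * b).coeff.support, ‖(a * b).coeff h‖ * σ (L h) ^ R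
      ≤ ∑ h ∈ (a * b).coeff.support, ∑ p ∈ S.filter (fun p => p.1 * p.2 = h), F p :=
        Finset.sum_le_sum step1
    _ ≤ ∑ h ∈ S.image (fun p => p.1 * p.2), ∑ p ∈ S.filter (fun p => p.1 * p.2 = h), F p := by
        apply Finset.sum_le_sum_of_subset_of_nonneg hsubset
        intro h _ _
        exact Finset.sum_nonneg (fun p _ => hFnonneg p)
    _ = ∑ p ∈ S, F p := by
        apply Finset.sum_fiberwise_of_maps_to
        intro p hp
        exact Finset.mem_image_of_mem _ hp
    _ = c ^ R * (∑ g ∈ a.coeff.support, ‖a.coeff g‖ * σ (L g) ^ (R + ε)) *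
          (∑ g ∈ b.coeff.support, ‖b.coeff g‖ * σ (L g) ^ (R + ε)) := by
        rw [mul_assoc, Finset.sum_mul_sum, Finset.mul_sum, hS]
        rw [Finset.sum_product]
        simp only [Finset.mul_sum]
        apply Finset.sum_congr rfl
        intro g₁ _
        apply Finset.sum_congr rfl
        intro g₂ _
        simp only [hF]
        ring
end

section
/- Let G be a finitely generated group with word length L, σ a monotone unbounded map ℕ → [1,∞) with (1+n) ≼ σ, and assume σ is almost submultiplicative. Then the following are equivalent: (i) the surface growth satisfies σ_G ≼ σ; (ii) there exists ρ > 0 such that Σ_{g∈G} σ(L(g))^{-ρ} < ∞. -/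
/-!
Grouping the elements of `G` by length turns `∑_g σ(L g)^(-ρ)` into `∑_n σ_G(n) σ(n)^(-ρ)`.
If `σ_G(n) ≤ c σ(cn)^k`, almost submultiplicativity gives `σ(cn) ≤ C σ(n)^K`, so
`σ_G(n) σ(n)^(-ρ) ≤ D σ(n)^(-p)` for `ρ = Kk + p`, where `p` is chosen with `∑_n σ(n)^(-p) < ∞`
using `(1 + n) ≼ σ`. Conversely, each term of a convergent series is bounded by its sum `S`, so
`σ_G(n) ≤ S σ(n)^ρ`, and monotonicity of `σ` gives `σ_G ≼ σ`.
-/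

/-- The coarse growth comparison relation: `f ≼ g` iff there are constants
`c, k ≥ 1` with `f n ≤ c * g (c * n) ^ k` for all `n`. -/
def GrowthLE (f g : ℕ → ℝ) : Prop :=
  ∃ (c : ℕ) (k : ℝ), 1 ≤ c ∧ 1 ≤ k ∧ ∀ n : ℕ, f n ≤ (c : ℝ) * g (c * n) ^ k

theorem summable_comp_iff_summable_ncard_mul {α : Type*} (L : α → ℕ)
    (hfin : ∀ n, {a | L a = n}.Finite) {f : ℕ → ℝ} (hf : ∀ n, 0 ≤ f n) :
    Summable (fun a => f (L a)) ↔ Summable fun n => ({a | L a = n}.ncard : ℝ) * f n := by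
  have hfiber (n : ℕ) : ∑' a : {a // L a = n}, f (L a) = ({a | L a = n}.ncard : ℝ) * f n := by
    rw [tsum_congr fun a => congrArg f a.prop, tsum_const, nsmul_eq_mul, ← Nat.card_coe_set_eq]
    rfl
  rw [← (Equiv.sigmaFiberEquiv L).summable_iff, Function.comp_def,
    summable_sigma_of_nonneg fun _ => hf _]
  simp only [Equiv.sigmaFiberEquiv_apply, hfiber]
  exact and_iff_right fun n => (hfin n).summable (f ∘ L)

section

variable {σ : ℕ → ℝ}

theorem exists_le_mul_rpow_comp_mul (hσ : ∀ n, 1 ≤ σ n) {c₀ a : ℝ} (hc₀ : 0 < c₀) (ha : 1 ≤ a)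
    (hsub : ∀ n m, σ (n + m) ≤ c₀ * σ n ^ a * σ m ^ a) (c : ℕ) :
    ∃ C K : ℝ, 0 < C ∧ 1 ≤ K ∧ ∀ n, σ (c * n) ≤ C * σ n ^ K := by
  have hσpos (n : ℕ) : 0 < σ n := one_pos.trans_le (hσ n)
  induction c with
  | zero =>
    refine ⟨σ 0, 1, hσpos 0, le_rfl, fun n => ?_⟩
    simpa using le_mul_of_one_le_right (hσpos 0).le (hσ n)
  | succ c ih =>
    obtain ⟨C, K, hC, hK, hCK⟩ := ih
    refine ⟨c₀ * C ^ a, K * a + a, mul_pos hc₀ (Real.rpow_pos_of_pos hC a), by nlinarith,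
      fun n => ?_⟩
    calc σ ((c + 1) * n) = σ (c * n + n) := by rw [Nat.succ_mul]
      _ ≤ c₀ * σ (c * n) ^ a * σ n ^ a := hsub _ _
      _ ≤ c₀ * (C * σ n ^ K) ^ a * σ n ^ a := by
        gcongr
        exacts [Real.rpow_nonneg (hσpos n).le a, (hσpos _).le, hCK n]
      _ = c₀ * C ^ a * σ n ^ (K * a + a) := by
        rw [Real.mul_rpow hC.le (Real.rpow_nonneg (hσpos n).le K), ← Real.rpow_mul (hσpos n).le,
          Real.rpow_add (hσpos n)]
        ring

theorem GrowthLE.exists_le_mul_rpow {f : ℕ → ℝ} (h : GrowthLE f σ) (hσ : ∀ n, 1 ≤ σ n)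
    {c₀ a : ℝ} (hc₀ : 0 < c₀) (ha : 1 ≤ a)
    (hsub : ∀ n m, σ (n + m) ≤ c₀ * σ n ^ a * σ m ^ a) :
    ∃ D K : ℝ, 0 < D ∧ 1 ≤ K ∧ ∀ n, f n ≤ D * σ n ^ K := by
  obtain ⟨c, k, hc, hk, hf⟩ := h
  obtain ⟨C, K, hC, hK, hCK⟩ := exists_le_mul_rpow_comp_mul hσ hc₀ ha hsub c
  have hσpos (n : ℕ) : 0 < σ n := one_pos.trans_le (hσ n)
  refine ⟨c * C ^ k, K * k, mul_pos (Nat.cast_pos.2 hc) (Real.rpow_pos_of_pos hC k), by nlinarith,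
    fun n => ?_⟩
  calc f n ≤ c * σ (c * n) ^ k := hf n
    _ ≤ c * (C * σ n ^ K) ^ k := by
      gcongr
      exacts [(hσpos _).le, hCK n]
    _ = c * C ^ k * σ n ^ (K * k) := by
      rw [Real.mul_rpow hC.le (Real.rpow_nonneg (hσpos n).le K), ← Real.rpow_mul (hσpos n).le]
      ring

theorem summable_rpow_neg_of_le_mul_rpow (hσ : ∀ n, 0 < σ n) {D K : ℝ} (hD : 0 < D)
    (h : ∀ n : ℕ, 1 + (n : ℝ) ≤ D * σ n ^ K) : Summable fun n => σ n ^ (-(2 * K)) := by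
  have hmaj : Summable fun n : ℕ => D ^ 2 * (1 / |(n : ℝ) + 1| ^ (2 : ℝ)) :=
    ((Real.summable_one_div_nat_add_rpow 1 2).2 one_lt_two).mul_left _
  refine hmaj.of_nonneg_of_le (fun n => Real.rpow_nonneg (hσ n).le _) fun n => ?_
  have hx : 0 < σ n ^ K := Real.rpow_pos_of_pos (hσ n) K
  rw [abs_of_pos (by positivity), Real.rpow_two, Real.rpow_neg (hσ n).le, mul_comm,
    Real.rpow_mul (hσ n).le, Real.rpow_two]
  calc ((σ n ^ K) ^ 2)⁻¹ = D ^ 2 / (D * σ n ^ K) ^ 2 := by field_simp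
    _ ≤ D ^ 2 / ((n : ℝ) + 1) ^ 2 := by gcongr; linarith [h n]
    _ = D ^ 2 * (1 / ((n : ℝ) + 1) ^ 2) := by ring

theorem GrowthLE.exists_summable_mul_rpow_neg {s : ℕ → ℝ} (h : GrowthLE s σ)
    (hs : ∀ n, 0 ≤ s n) (hσ : ∀ n, 1 ≤ σ n) {c₀ a : ℝ} (hc₀ : 0 < c₀) (ha : 1 ≤ a)
    (hsub : ∀ n m, σ (n + m) ≤ c₀ * σ n ^ a * σ m ^ a)
    (hlin : GrowthLE (fun n : ℕ => (1 : ℝ) + n) σ) :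
    ∃ ρ : ℝ, 0 < ρ ∧ Summable fun n => s n * σ n ^ (-ρ) := by
  obtain ⟨D, K, -, hK, hs_le⟩ := h.exists_le_mul_rpow hσ hc₀ ha hsub
  obtain ⟨D', K', hD', hK', hlin_le⟩ := hlin.exists_le_mul_rpow hσ hc₀ ha hsub
  have hσpos (n : ℕ) : 0 < σ n := one_pos.trans_le (hσ n)
  refine ⟨K + 2 * K', by linarith, ?_⟩
  refine ((summable_rpow_neg_of_le_mul_rpow hσpos hD' hlin_le).mul_left D).of_nonneg_of_le
    (fun n => mul_nonneg (hs n) (Real.rpow_nonneg (hσpos n).le _)) fun n => ?_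
  calc s n * σ n ^ (-(K + 2 * K')) ≤ D * σ n ^ K * σ n ^ (-(K + 2 * K')) := by
        gcongr
        exacts [Real.rpow_nonneg (hσpos n).le _, hs_le n]
    _ = D * σ n ^ (-(2 * K')) := by
        rw [mul_assoc, ← Real.rpow_add (hσpos n)]
        ring_nf

theorem growthLE_of_summable_mul_rpow_neg {s : ℕ → ℝ} (hs : ∀ n, 0 ≤ s n)
    (hσ : ∀ n, 1 ≤ σ n) (hmono : Monotone σ) {ρ : ℝ}
    (h : Summable fun n => s n * σ n ^ (-ρ)) : GrowthLE s σ := by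
  have hσpos (n : ℕ) : 0 < σ n := one_pos.trans_le (hσ n)
  set S := ∑' n, s n * σ n ^ (-ρ)
  set c := max ⌈S⌉₊ 1
  refine ⟨c, max ρ 1, le_max_right _ _, le_max_right _ _, fun n => ?_⟩
  have hterm : s n * σ n ^ (-ρ) ≤ S :=
    h.le_tsum n fun j _ => mul_nonneg (hs j) (Real.rpow_nonneg (hσpos j).le _)
  have hSc : S ≤ c := (Nat.le_ceil S).trans (by exact_mod_cast le_max_left _ _)
  calc s n = s n * σ n ^ (-ρ) * σ n ^ ρ := by
        rw [mul_assoc, ← Real.rpow_add (hσpos n), neg_add_cancel, Real.rpow_zero, mul_one]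
    _ ≤ c * σ n ^ ρ := by
        gcongr
        exacts [Real.rpow_nonneg (hσpos n).le _, hterm.trans hSc]
    _ ≤ c * σ n ^ max ρ 1 := by gcongr; exacts [hσ n, le_max_left _ _]
    _ ≤ c * σ (c * n) ^ max ρ 1 := by
        gcongr
        exacts [(hσpos n).le, hmono (Nat.le_mul_of_pos_left n (by omega))]

end

theorem surface_growth_le_iff_summable_general
    {G : Type*} (L : G → ℕ)
    (hball : ∀ n : ℕ, {g : G | L g ≤ n}.Finite)
    (σ : ℕ → ℝ) (hσ1 : ∀ n, 1 ≤ σ n) (hmono : Monotone σ)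
    (hlin : GrowthLE (fun n : ℕ => (1 : ℝ) + n) σ)
    (halmost : ∀ ε : ℝ, 0 < ε → ∃ c : ℝ, 0 < c ∧
      ∀ n m : ℕ, σ (n + m) ≤ c * σ n ^ ((1 : ℝ) + ε) * σ m ^ ((1 : ℝ) + ε)) :
    GrowthLE (fun n : ℕ => (Set.ncard {g : G | L g = n} : ℝ)) σ ↔
      ∃ ρ : ℝ, 0 < ρ ∧ Summable (fun g : G => σ (L g) ^ (-ρ)) := by
  have hfib (n : ℕ) : {g : G | L g = n}.Finite := (hball n).subset fun _ hg => hg.le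
  have hsum_iff (ρ : ℝ) := summable_comp_iff_summable_ncard_mul L hfib
    (f := fun n => σ n ^ (-ρ)) fun n => Real.rpow_nonneg (zero_le_one.trans (hσ1 n)) _
  have hcard (n : ℕ) : (0 : ℝ) ≤ ({g : G | L g = n}.ncard : ℝ) := Nat.cast_nonneg _
  obtain ⟨c₀, hc₀, hsub⟩ := halmost 1 one_pos
  constructor
  · intro h
    obtain ⟨ρ, hρ, hs⟩ :=
      h.exists_summable_mul_rpow_neg hcard hσ1 hc₀ (by norm_num) hsub hlin
    exact ⟨ρ, hρ, (hsum_iff ρ).2 hs⟩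
  · rintro ⟨ρ, -, hs⟩
    exact growthLE_of_summable_mul_rpow_neg hcard hσ1 hmono ((hsum_iff ρ).1 hs)

theorem surface_growth_le_iff_summable
    {G : Type*} [Group G] [Infinite G] (L : G → ℕ)
    (hL1 : L 1 = 0) (hLinv : ∀ g : G, L g⁻¹ = L g)
    (hLsub : ∀ g h : G, L (g * h) ≤ L g + L h)
    (hball : ∀ n : ℕ, {g : G | L g ≤ n}.Finite)
    (σ : ℕ → ℝ) (hσ1 : ∀ n, 1 ≤ σ n) (hmono : Monotone σ)
    (hunbdd : ¬ BddAbove (Set.range σ))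
    (hlin : GrowthLE (fun n : ℕ => (1 : ℝ) + n) σ)
    (halmost : ∀ ε : ℝ, 0 < ε → ∃ c : ℝ, 0 < c ∧
      ∀ n m : ℕ, σ (n + m) ≤ c * σ n ^ ((1 : ℝ) + ε) * σ m ^ ((1 : ℝ) + ε)) :
    GrowthLE (fun n : ℕ => (Set.ncard {g : G | L g = n} : ℝ)) σ ↔
      ∃ ρ : ℝ, 0 < ρ ∧ Summable (fun g : G => σ (L g) ^ (-ρ)) :=
  surface_growth_le_iff_summable_general L hball σ hσ1 hmono hlin halmost
end
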